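/- With U_K defined as the expectation over ψ₀ ~ q(ψ|z) and ψ₁,…,ψ_K ~ τ(·|z) i.i.d. of log( (1/(K+1)) Σ_{k=0}^{K} q(z, ψ_k)/τ(ψ_k|z) ), the sequence U_K is monotonically non-increasing in K: U_K ≥ U_{K+1} for all K ∈ ℕ. -/

import Mathlib

open MeasureTheory

section IWHVIAux

variable {Ψ : Type*} [MeasurableSpace Ψ]

/-- average of importance weights over `N+1` samples -/
noncomputable def iwAvg (qj τ : Ψ → ℝ) (N : ℕ) (ψs : Fin (N + 1) → Ψ) : ℝ :=
  ((N : ℝ) + 1)⁻¹ * ∑ k : Fin (N + 1), qj (ψs k) / τ (ψs k)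

/-- integrand with the importance weight placed at index `j` -/
noncomputable def iwF (qj τ : Ψ → ℝ) (qz : ℝ) (N : ℕ) (j : Fin (N + 1))
    (ψs : Fin (N + 1) → Ψ) : ℝ :=
  (qj (ψs j) / τ (ψs j) / qz * ∏ k : Fin (N + 1), τ (ψs k)) *
    Real.log (iwAvg qj τ N ψs)

/-- symmetrized integrand -/
noncomputable def iwG (qj τ : Ψ → ℝ) (qz : ℝ) (N : ℕ) (ψs : Fin (N + 1) → Ψ) : ℝ :=
  (∏ k : Fin (N + 1), τ (ψs k)) / qz *
    (iwAvg qj τ N ψs * Real.log (iwAvg qj τ N ψs))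

theorem iwAvg_nonneg (qj τ : Ψ → ℝ) (hqj : ∀ ψ, 0 ≤ qj ψ) (hτ : ∀ ψ, 0 ≤ τ ψ)
    (N : ℕ) (ψs : Fin (N + 1) → Ψ) : 0 ≤ iwAvg qj τ N ψs := by
  unfold iwAvg
  have h1 : (0:ℝ) ≤ ((N : ℝ) + 1)⁻¹ := by positivity
  exact mul_nonneg h1 (Finset.sum_nonneg fun k _ => div_nonneg (hqj _) (hτ _))

theorem iwF_zero_eq (qj τ : Ψ → ℝ) (qz : ℝ) (hqz : qz ≠ 0)
    (habs : ∀ ψ, τ ψ = 0 → qj ψ = 0) (N : ℕ) (ψs : Fin (N + 1) → Ψ) :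
    (qj (ψs 0) / qz * ∏ k : Fin N, τ (ψs k.succ)) *
      Real.log (((N : ℝ) + 1)⁻¹ * ∑ k : Fin (N + 1), qj (ψs k) / τ (ψs k)) =
    iwF qj τ qz N 0 ψs := by
  unfold iwF iwAvg
  rw [Fin.prod_univ_succ]
  congr 1
  rcases eq_or_ne (τ (ψs 0)) 0 with h | h
  · simp [h, habs _ h]
  · field_simp

theorem iwSum_F_eq (qj τ : Ψ → ℝ) {qz : ℝ} (hqz : qz ≠ 0) (N : ℕ)
    (ψs : Fin (N + 1) → Ψ) :
    ∑ j : Fin (N + 1), iwF qj τ qz N j ψs = ((N : ℝ) + 1) * iwG qj τ qz N ψs := by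
  unfold iwF iwG iwAvg
  have h : ((N : ℝ) + 1) ≠ 0 := by positivity
  set S := ∑ k : Fin (N + 1), qj (ψs k) / τ (ψs k) with hS
  set L := Real.log (((N : ℝ) + 1)⁻¹ * S) with hL
  rw [← Finset.sum_mul, ← Finset.sum_mul, ← Finset.sum_div, ← hS]
  field_simp

theorem iw_integral_comp_perm (μ : Measure Ψ) [SigmaFinite μ] {m : ℕ}
    (G : (Fin m → Ψ) → ℝ) (e : Fin m ≃ Fin m) :
    (∫ x : Fin m → Ψ, G (fun i => x (e i)) ∂(Measure.pi fun _ => μ)) =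
      ∫ x, G x ∂(Measure.pi fun _ => μ) := by
  have hmp : MeasurePreserving
      (MeasurableEquiv.piCongrLeft (fun _ : Fin m => Ψ) e.symm)
      (Measure.pi fun _ => μ) (Measure.pi fun _ => μ) :=
    MeasureTheory.measurePreserving_piCongrLeft (fun _ => μ) e.symm
  have happ : ∀ x : Fin m → Ψ,
      (MeasurableEquiv.piCongrLeft (fun _ : Fin m => Ψ) e.symm) x
        = fun i => x (e i) := by
    intro x; funext i
    have := MeasurableEquiv.piCongrLeft_apply_apply e.symm
      (β := fun _ : Fin m => Ψ) x (e i)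
    simpa using this
  have := hmp.integral_comp'
    (f := MeasurableEquiv.piCongrLeft (fun _ : Fin m => Ψ) e.symm) G
  rw [← this]
  congr 1; funext x; rw [happ x]

theorem iw_integrable_comp_perm (μ : Measure Ψ) [SigmaFinite μ] {m : ℕ}
    (G : (Fin m → Ψ) → ℝ) (hG : Integrable G (Measure.pi fun _ : Fin m => μ))
    (e : Fin m ≃ Fin m) :
    Integrable (fun x : Fin m → Ψ => G (fun i => x (e i)))
      (Measure.pi fun _ : Fin m => μ) := by
  have hmp : MeasurePreserving
      (MeasurableEquiv.piCongrLeft (fun _ : Fin m => Ψ) e.symm)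
      (Measure.pi fun _ => μ) (Measure.pi fun _ => μ) :=
    MeasureTheory.measurePreserving_piCongrLeft (fun _ => μ) e.symm
  have happ : ∀ x : Fin m → Ψ,
      (MeasurableEquiv.piCongrLeft (fun _ : Fin m => Ψ) e.symm) x
        = fun i => x (e i) := by
    intro x; funext i
    have := MeasurableEquiv.piCongrLeft_apply_apply e.symm
      (β := fun _ : Fin m => Ψ) x (e i)
    simpa using this
  have h2 := (hmp.integrable_comp_emb
      (MeasurableEquiv.piCongrLeft (fun _ : Fin m => Ψ) e.symm).measurableEmbedding).2 hG
  refine h2.congr (Filter.Eventually.of_forall fun x => ?_)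
  simp [Function.comp, happ x]

theorem iwF_swap (qj τ : Ψ → ℝ) (qz : ℝ) (N : ℕ) (j : Fin (N + 1))
    (x : Fin (N + 1) → Ψ) :
    iwF qj τ qz N 0 (fun i => x (Equiv.swap 0 j i)) = iwF qj τ qz N j x := by
  unfold iwF iwAvg
  rw [Equiv.prod_comp (Equiv.swap 0 j) (fun k => τ (x k)),
    Equiv.sum_comp (Equiv.swap 0 j) (fun k => qj (x k) / τ (x k))]
  simp [Equiv.swap_apply_left]

theorem iw_marg_integral (μ : Measure Ψ) [SigmaFinite μ]
    (n : ℕ) (j : Fin (n+2)) (τ : Ψ → ℝ) (g : (Fin (n+1) → Ψ) → ℝ) :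
    (∫ x : Fin (n+2) → Ψ, τ (x j) * g (fun k => x (j.succAbove k))
        ∂(Measure.pi fun _ => μ)) =
      (∫ a, τ a ∂μ) * ∫ y, g y ∂(Measure.pi fun _ : Fin (n+1) => μ) := by
  have hmp := measurePreserving_piFinSuccAbove (fun _ : Fin (n+2) => μ) j
  exact (hmp.integral_comp' (g := fun p => τ p.1 * g p.2)
    (f := MeasurableEquiv.piFinSuccAbove (fun _ : Fin (n+2) => Ψ) j)).trans
    (integral_prod_mul τ g)

theorem iw_marg_integrable (μ : Measure Ψ) [SigmaFinite μ]
    (n : ℕ) (j : Fin (n+2)) (τ : Ψ → ℝ) (g : (Fin (n+1) → Ψ) → ℝ)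
    (hτ : Integrable τ μ) (hg : Integrable g (Measure.pi fun _ : Fin (n+1) => μ)) :
    Integrable (fun x : Fin (n+2) → Ψ => τ (x j) * g (fun k => x (j.succAbove k)))
      (Measure.pi fun _ : Fin (n+2) => μ) := by
  have hmp := measurePreserving_piFinSuccAbove (fun _ : Fin (n+2) => μ) j
  have hprod : Integrable (fun p : Ψ × (Fin (n+1) → Ψ) => τ p.1 * g p.2)
      (μ.prod (Measure.pi fun _ => μ)) := hτ.mul_prod hg
  exact (hmp.integrable_comp_emb
    (MeasurableEquiv.piFinSuccAbove (fun _ : Fin (n+2) => Ψ) j).measurableEmbedding).2 hprod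

theorem iw_convexity (n : ℕ) (a : Fin (n+2) → ℝ) (ha : ∀ j, 0 ≤ a j) :
    (∑ j, ((n:ℝ)+2)⁻¹ * a j) * Real.log (∑ j, ((n:ℝ)+2)⁻¹ * a j)
      ≤ ∑ j, ((n:ℝ)+2)⁻¹ * (a j * Real.log (a j)) := by
  have h := Real.convexOn_mul_log.map_sum_le (t := Finset.univ) (p := a)
    (w := fun _ => ((n:ℝ)+2)⁻¹) (fun i _ => by positivity)
    (by simp; field_simp) (fun i _ => ha i)
  simpa [smul_eq_mul, Finset.mul_sum] using h

theorem iw_double_sum (n : ℕ) (g : Fin (n+2) → ℝ) :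
    ∑ j : Fin (n+2), ∑ k : Fin (n+1), g (j.succAbove k) = ((n:ℝ)+1) * ∑ j, g j := by
  have h : ∀ j : Fin (n+2), ∑ k : Fin (n+1), g (j.succAbove k) = (∑ i, g i) - g j := by
    intro j
    have := Fin.sum_univ_succAbove g j
    linarith [this]
  simp only [h]
  rw [Finset.sum_sub_distrib, Finset.sum_const, Finset.card_univ]
  simp [Fintype.card_fin]
  ring

end IWHVIAux

/-- With
`U K = E_{ψ₀ ~ q(·|z)} E_{ψ₁,…,ψ_K ~ τ i.i.d.} log((K+1)⁻¹ ∑_{k=0}^K q(z,ψ_k)/τ(ψ_k))`,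
the sequence `U K` is monotonically non-increasing: `U (K+1) ≤ U K` for all `K`. -/
theorem iwhvi_upper_bound_monotone
    {Ψ : Type*} [MeasurableSpace Ψ] (μ : Measure Ψ) [SigmaFinite μ]
    (qz : ℝ) (qj τ : Ψ → ℝ)
    (hqz : 0 < qz)
    (hqj_nonneg : ∀ ψ, 0 ≤ qj ψ) (hτ_nonneg : ∀ ψ, 0 ≤ τ ψ)
    (hqj_meas : Measurable qj) (hτ_meas : Measurable τ)
    (hmarg : ∫ ψ, qj ψ ∂μ = qz)
    (hτ_prob : ∫ ψ, τ ψ ∂μ = 1)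
    (habs : ∀ ψ, τ ψ = 0 → qj ψ = 0)
    (U : ℕ → ℝ)
    (hU : ∀ n : ℕ, U n =
      ∫ ψs : Fin (n + 1) → Ψ,
        (qj (ψs 0) / qz * ∏ k : Fin n, τ (ψs k.succ)) *
          Real.log (((n : ℝ) + 1)⁻¹ * ∑ k : Fin (n + 1), qj (ψs k) / τ (ψs k))
        ∂(Measure.pi fun _ : Fin (n + 1) => μ))
    (hint : ∀ n : ℕ, Integrable
      (fun ψs : Fin (n + 1) → Ψ =>
        (qj (ψs 0) / qz * ∏ k : Fin n, τ (ψs k.succ)) *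
          Real.log (((n : ℝ) + 1)⁻¹ * ∑ k : Fin (n + 1), qj (ψs k) / τ (ψs k)))
      (Measure.pi fun _ : Fin (n + 1) => μ))
    (K : ℕ) :
    U (K + 1) ≤ U K := by
  have hqz' : qz ≠ 0 := ne_of_gt hqz
  have hτ_int : Integrable τ μ := by
    by_contra h
    rw [integral_undef h] at hτ_prob
    exact one_ne_zero hτ_prob.symm
  -- rewrite the original integrand as `iwF ... 0`
  have horig : ∀ N : ℕ, (fun ψs : Fin (N + 1) → Ψ =>
      (qj (ψs 0) / qz * ∏ k : Fin N, τ (ψs k.succ)) *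
        Real.log (((N : ℝ) + 1)⁻¹ * ∑ k : Fin (N + 1), qj (ψs k) / τ (ψs k)))
      = iwF qj τ qz N 0 :=
    fun N => funext fun ψs => iwF_zero_eq qj τ qz hqz' habs N ψs
  have hF0_int : ∀ N : ℕ, Integrable (iwF qj τ qz N 0)
      (Measure.pi fun _ : Fin (N + 1) => μ) := fun N => (horig N) ▸ hint N
  -- every `iwF j` is integrable with the same integral
  have hFj_int : ∀ N : ℕ, ∀ j : Fin (N + 1), Integrable (iwF qj τ qz N j)
      (Measure.pi fun _ : Fin (N + 1) => μ) := by
    intro N j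
    have h := iw_integrable_comp_perm μ (iwF qj τ qz N 0) (hF0_int N) (Equiv.swap 0 j)
    refine h.congr (Filter.Eventually.of_forall fun x => ?_)
    exact iwF_swap qj τ qz N j x
  have hFj_val : ∀ N : ℕ, ∀ j : Fin (N + 1),
      (∫ x, iwF qj τ qz N j x ∂(Measure.pi fun _ : Fin (N + 1) => μ))
        = ∫ x, iwF qj τ qz N 0 x ∂(Measure.pi fun _ : Fin (N + 1) => μ) := by
    intro N j
    rw [← iw_integral_comp_perm μ (iwF qj τ qz N 0) (Equiv.swap 0 j)]
    congr 1
    funext x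
    exact (iwF_swap qj τ qz N j x).symm
  -- `iwG` as a normalized sum of the `iwF j`
  have hGsum : ∀ N : ℕ, iwG qj τ qz N = fun ψs : Fin (N + 1) → Ψ =>
      ((N : ℝ) + 1)⁻¹ * ∑ j : Fin (N + 1), iwF qj τ qz N j ψs := by
    intro N
    funext ψs
    have h : ((N : ℝ) + 1) ≠ 0 := by positivity
    rw [iwSum_F_eq qj τ hqz' N ψs, inv_mul_cancel_left₀ h]
  have hG_int : ∀ N : ℕ, Integrable (iwG qj τ qz N)
      (Measure.pi fun _ : Fin (N + 1) => μ) := by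
    intro N
    rw [hGsum N]
    exact (integrable_finset_sum Finset.univ fun j _ => hFj_int N j).const_mul _
  have hG_val : ∀ N : ℕ, U N = ∫ x, iwG qj τ qz N x
      ∂(Measure.pi fun _ : Fin (N + 1) => μ) := by
    intro N
    have h : ((N : ℝ) + 1) ≠ 0 := by positivity
    rw [hGsum N]
    rw [MeasureTheory.integral_const_mul, integral_finset_sum Finset.univ
      (fun j _ => hFj_int N j)]
    have hsum : ∑ j : Fin (N + 1),
        (∫ x, iwF qj τ qz N j x ∂(Measure.pi fun _ : Fin (N + 1) => μ))
        = ((N : ℝ) + 1) * ∫ x, iwF qj τ qz N 0 x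
            ∂(Measure.pi fun _ : Fin (N + 1) => μ) := by
      rw [Finset.sum_congr rfl fun j _ => hFj_val N j]
      simp [Finset.card_univ]
    rw [hsum, inv_mul_cancel_left₀ h, hU N, horig N]
  -- the leave-one-out integrands
  set H : Fin (K + 2) → (Fin (K + 2) → Ψ) → ℝ := fun j ψs =>
    τ (ψs j) * iwG qj τ qz K (fun k => ψs (j.succAbove k)) with hH
  have hH_int : ∀ j : Fin (K + 2), Integrable (H j)
      (Measure.pi fun _ : Fin (K + 2) => μ) :=
    fun j => iw_marg_integrable μ K j τ (iwG qj τ qz K) hτ_int (hG_int K)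
  have hH_val : ∀ j : Fin (K + 2),
      (∫ x, H j x ∂(Measure.pi fun _ : Fin (K + 2) => μ)) = U K := by
    intro j
    rw [hH]
    rw [iw_marg_integral μ K j τ (iwG qj τ qz K), hτ_prob, one_mul]
    exact (hG_val K).symm
  -- pointwise convexity inequality
  have hpoint : ∀ ψs : Fin (K + 2) → Ψ,
      iwG qj τ qz (K + 1) ψs ≤ ((K : ℝ) + 2)⁻¹ * ∑ j : Fin (K + 2), H j ψs := by
    intro ψs
    set A : Fin (K + 2) → ℝ := fun j => iwAvg qj τ K (fun k => ψs (j.succAbove k)) with hA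
    have hAnn : ∀ j, 0 ≤ A j := fun j =>
      iwAvg_nonneg qj τ hqj_nonneg hτ_nonneg K _
    set P : ℝ := ∏ k : Fin (K + 2), τ (ψs k) with hP
    have hPnn : 0 ≤ P := Finset.prod_nonneg fun k _ => hτ_nonneg _
    have hHj : ∀ j : Fin (K + 2), H j ψs = P / qz * (A j * Real.log (A j)) := by
      intro j
      have hprod := Fin.prod_univ_succAbove (fun k => τ (ψs k)) j
      simp only [hH, iwG, hA, hP, hprod]
      ring
    have havg : iwAvg qj τ (K + 1) ψs = ∑ j : Fin (K + 2), ((K : ℝ) + 2)⁻¹ * A j := by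
      unfold iwAvg
      rw [← Finset.mul_sum]
      have hdss := iw_double_sum K (fun m => qj (ψs m) / τ (ψs m))
      have hsumA : ∑ j : Fin (K + 2), A j
          = ∑ k : Fin (K + 2), qj (ψs k) / τ (ψs k) := by
        rw [hA]
        unfold iwAvg
        rw [← Finset.mul_sum, hdss]
        have h1 : ((K : ℝ) + 1) ≠ 0 := by positivity
        rw [inv_mul_cancel_left₀ h1]
      rw [hsumA]
      congr 1
      push_cast
      ring
    have hconv := iw_convexity K A hAnn
    rw [← havg] at hconv
    calc iwG qj τ qz (K + 1) ψs
        = P / qz * (iwAvg qj τ (K + 1) ψs * Real.log (iwAvg qj τ (K + 1) ψs)) := rfl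
      _ ≤ P / qz * ∑ j : Fin (K + 2), ((K : ℝ) + 2)⁻¹ * (A j * Real.log (A j)) := by
          apply mul_le_mul_of_nonneg_left hconv (div_nonneg hPnn hqz.le)
      _ = ((K : ℝ) + 2)⁻¹ * ∑ j : Fin (K + 2), H j ψs := by
          rw [Finset.mul_sum, Finset.mul_sum]
          refine Finset.sum_congr rfl fun j _ => ?_
          rw [hHj j]
          ring
  -- put everything together
  have hRHS_int : Integrable
      (fun ψs : Fin (K + 2) → Ψ => ((K : ℝ) + 2)⁻¹ * ∑ j : Fin (K + 2), H j ψs)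
      (Measure.pi fun _ : Fin (K + 2) => μ) :=
    (integrable_finset_sum Finset.univ fun j _ => hH_int j).const_mul _
  have hmono := integral_mono (hG_int (K + 1)) hRHS_int hpoint
  rw [← hG_val (K + 1)] at hmono
  refine hmono.trans_eq ?_
  rw [MeasureTheory.integral_const_mul, integral_finset_sum Finset.univ
    (fun j _ => hH_int j)]
  rw [Finset.sum_congr rfl fun j _ => hH_val j]
  simp [Finset.card_univ]
  rw [inv_mul_cancel_left₀ (by positivity : ((K:ℝ)+2) ≠ 0)]
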